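/- arXiv:math/0405393 — 4 statements merged into one kernel-verified Lean document; each statement's English description precedes it below -/
import Mathlib

section
/- For all integers d ≥ 1 and q ≥ 1 and every family of points x : Fin ((d+1)*(q-1)+1) → ℝ^d, there exist q pairwise disjoint nonempty subsets A_1, …, A_q of Fin ((d+1)*(q-1)+1) whose union is all of Fin ((d+1)*(q-1)+1), such that the intersection ⋂_{i=1}^q convexHull ℝ (x '' A_i) is nonempty. -/
/-!
Sarkaria's lift reduces the theorem to Bárány's colorful Carathéodory theorem. Send the point
`x i`, placed in part `j`, to `(x i, 1) ⊗ v j`, where `v 0, …, v m` span `ℝ^m` subject only to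
`∑ v j = 0`. Every point gets `q = m + 1` lifts averaging to `0`, and the lifted space has
dimension `(d + 1) m`, one less than the number of points, so some choice of one part per point
has `0` in the convex hull of its lifts. Reading off the coefficient of `v j` shows that the
weights in each part sum to `1 / q` and have the same barycenter, which then lies in all `q`
convex hulls.

Colorful Carathéodory: among all transversals choose one whose hull has a point `p` of minimal
norm. If `p ≠ 0`, the hull lies in `⟪p, ·⟫ ≥ ‖p‖²` and `p` is a convex combination of affinely
independent points on the hyperplane `⟪p, ·⟫ = ‖p‖²`, hence of at most `dim` of them, so one
color `i₀` is unused. As `0` is in the hull of color `i₀`, some point of that color has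
`⟪p, c⟫ ≤ 0`; swapping it in, the segment `[p, c]` contains a point shorter than `p`.
-/

open Finset Module
open scoped InnerProductSpace

lemma exists_sum_smul_eq_of_mem_convexHull_range {R V ι : Type*} [Field R] [LinearOrder R]
    [IsStrictOrderedRing R] [AddCommGroup V] [Module R V] [Fintype ι] {v : ι → V} {x : V}
    (hx : x ∈ convexHull R (Set.range v)) : ∃ w ∈ stdSimplex R ι, ∑ i, w i • v i = x := by
  classical
  rw [← convexHull_rangle_single_eq_stdSimplex]
  have : Set.range v = Fintype.linearCombination R v '' Set.range fun i => Pi.single i 1 := by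
    rw [← Set.range_comp]; congr; funext i; simp [Fintype.linearCombination_apply]
  rw [this, ← LinearMap.image_convexHull] at hx
  simpa [Fintype.linearCombination_apply] using hx

lemma exists_apply_nonpos_of_zero_mem_convexHull {R V : Type*} [Field R] [LinearOrder R]
    [IsStrictOrderedRing R] [AddCommGroup V] [Module R V] {s : Set V}
    (h : (0 : V) ∈ convexHull R s) (φ : V →ₗ[R] R) : ∃ c ∈ s, φ c ≤ 0 := by
  by_contra! hs
  have : convexHull R s ⊆ φ ⁻¹' Set.Ioi 0 := convexHull_min hs ((convex_Ioi 0).linear_preimage φ)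
  simpa using this h

lemma AffineIndependent.linearIndependent_of_apply_eq {R V ι : Type*} [Field R] [AddCommGroup V]
    [Module R V] {y : ι → V} (hy : AffineIndependent R y) (φ : V →ₗ[R] R) {r : R} (hr : r ≠ 0)
    (hφ : ∀ i, φ (y i) = r) : LinearIndependent R y := by
  rw [linearIndependent_iff']
  intro s w hw
  refine hy.eq_zero_of_sum_eq_zero ?_ hw
  have := congrArg φ hw
  simp only [map_sum, map_smul, hφ, smul_eq_mul, ← sum_mul, map_zero] at this
  exact (mul_eq_zero.1 this).resolve_right hr

section InnerProductSpace

variable {E : Type*} [NormedAddCommGroup E] [InnerProductSpace ℝ E]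

lemma exists_mem_segment_norm_lt {p c : E} (h : ⟪p, c⟫_ℝ < ‖p‖ ^ 2) :
    ∃ u ∈ segment ℝ p c, ‖u‖ < ‖p‖ := by
  set a := ⟪p, c - p⟫_ℝ
  set b := ‖c - p‖ ^ 2
  have ha : a < 0 := by
    simp only [a, inner_sub_right, real_inner_self_eq_norm_sq]; linarith
  have hb : 0 ≤ b := by positivity
  -- then `‖p + t • (c - p)‖² - ‖p‖² = t (2a + t b) = t (1 + t) a < 0`
  set t := -a / (b - a)
  have ht : t * (b - a) = -a := div_mul_cancel₀ _ (by linarith)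
  have ht0 : 0 < t := div_pos (by linarith) (by linarith)
  have ht1 : t ≤ 1 := (div_le_one (by linarith)).2 (by linarith)
  refine ⟨p + t • (c - p), segment_eq_image' ℝ p c ▸ ⟨t, ⟨ht0.le, ht1⟩, rfl⟩, ?_⟩
  have : ‖p + t • (c - p)‖ ^ 2 < ‖p‖ ^ 2 := by
    rw [norm_add_sq_real, real_inner_smul_right, norm_smul, mul_pow, Real.norm_of_nonneg ht0.le]
    nlinarith [mul_pos ht0 (neg_pos.2 ha)]
  exact lt_of_pow_lt_pow_left₀ 2 (norm_nonneg p) this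

lemma sq_norm_le_inner_of_isMinOn {K : Set E} (hK : Convex ℝ K) {p u : E} (hp : p ∈ K)
    (hu : u ∈ K) (hmin : IsMinOn (‖·‖) K p) : ‖p‖ ^ 2 ≤ ⟪p, u⟫_ℝ := by
  by_contra! h
  obtain ⟨v, hv, hlt⟩ := exists_mem_segment_norm_lt h
  exact hlt.not_ge (hmin (hK.segment_subset hp hu hv))

variable [FiniteDimensional ℝ E]

lemma exists_mem_convexHull_image_compl_of_sq_norm_le_inner {ι : Type*} [Fintype ι] {z : ι → E}
    (hcard : finrank ℝ E < Fintype.card ι) {p : E} (hp0 : p ≠ 0)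
    (hp : p ∈ convexHull ℝ (Set.range z)) (hz : ∀ i, ‖p‖ ^ 2 ≤ ⟪p, z i⟫_ℝ) :
    ∃ i₀, p ∈ convexHull ℝ (z '' {i₀}ᶜ) := by
  obtain ⟨κ, _, y, w, hyz, hy, hw0, hw1, hwy⟩ := eq_pos_convex_span_of_mem_convexHull hp
  choose φ hφ using fun k => hyz ⟨k, rfl⟩
  have hyp : ∀ k, ⟪p, y k⟫_ℝ = ‖p‖ ^ 2 := by
    have hsum : ∑ k, w k * (⟪p, y k⟫_ℝ - ‖p‖ ^ 2) = 0 := by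
      simp only [mul_sub, sum_sub_distrib, ← sum_mul, hw1, ← real_inner_smul_right, ← inner_sum,
        hwy, real_inner_self_eq_norm_sq, one_mul, sub_self]
    intro k
    have hle : ∀ k, 0 ≤ w k * (⟪p, y k⟫_ℝ - ‖p‖ ^ 2) := fun k =>
      mul_nonneg (hw0 k).le (sub_nonneg.2 (hφ k ▸ hz (φ k)))
    have := (sum_eq_zero_iff_of_nonneg fun k _ => hle k).1 hsum k (mem_univ k)
    linarith [(mul_eq_zero.1 this).resolve_left (hw0 k).ne']
  have hyind : LinearIndependent ℝ y :=
    hy.linearIndependent_of_apply_eq (innerₛₗ ℝ p) (by positivity) hyp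
  obtain ⟨i₀, hi₀⟩ : ∃ i₀, ∀ k, φ k ≠ i₀ := by
    by_contra! h
    have := Fintype.card_le_of_surjective φ h
    have := hyind.fintype_card_le_finrank
    omega
  refine ⟨i₀, hwy ▸ (convex_convexHull ℝ _).sum_mem (fun k _ => (hw0 k).le) hw1
    fun k _ => subset_convexHull ℝ _ ⟨φ k, hi₀ k, hφ k⟩⟩

theorem colorful_caratheodory_of_inner {ι κ : Type*} [Fintype ι] [Finite κ] (f : ι → κ → E)
    (hcard : finrank ℝ E < Fintype.card ι) (hf : ∀ i, (0 : E) ∈ convexHull ℝ (Set.range (f i))) :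
    ∃ g : ι → κ, (0 : E) ∈ convexHull ℝ (Set.range fun i => f i (g i)) := by
  classical
  obtain ⟨i₁⟩ : Nonempty ι := Fintype.card_pos_iff.1 (by omega)
  obtain ⟨j₁⟩ : Nonempty κ :=
    Set.range_nonempty_iff_nonempty.1 (convexHull_nonempty_iff.1 ⟨0, hf i₁⟩)
  let K : (ι → κ) → Set E := fun g => convexHull ℝ (Set.range fun i => f i (g i))
  have hK : IsCompact (⋃ g, K g) :=
    isCompact_iUnion fun g => (Set.finite_range _).isCompact_convexHull ℝ
  obtain ⟨p, hpK, hmin⟩ := hK.exists_isMinOn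
    ⟨_, Set.mem_iUnion.2 ⟨fun _ => j₁, subset_convexHull ℝ _ ⟨i₁, rfl⟩⟩⟩
    continuous_norm.continuousOn
  obtain ⟨g, hpg⟩ := Set.mem_iUnion.1 hpK
  refine ⟨g, ?_⟩
  by_contra h0
  have hp0 : p ≠ 0 := by rintro rfl; exact h0 hpg
  obtain ⟨i₀, hi₀⟩ := exists_mem_convexHull_image_compl_of_sq_norm_le_inner hcard hp0 hpg
    fun i => sq_norm_le_inner_of_isMinOn (convex_convexHull ℝ _) hpg
      (subset_convexHull ℝ _ ⟨i, rfl⟩) (hmin.on_subset (Set.subset_iUnion K g))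
  obtain ⟨_, ⟨j, rfl⟩, hj⟩ := exists_apply_nonpos_of_zero_mem_convexHull (hf i₀) (innerₛₗ ℝ p)
  let g' := Function.update g i₀ j
  have hpg' : p ∈ K g' := by
    refine convexHull_mono ?_ hi₀
    rintro _ ⟨i, hi, rfl⟩
    exact ⟨i, by simp [g', Function.update_of_ne hi]⟩
  have hjg' : f i₀ j ∈ K g' := subset_convexHull ℝ _ ⟨i₀, by simp [g']⟩
  obtain ⟨u, hu, hlt⟩ := exists_mem_segment_norm_lt (p := p) (c := f i₀ j)
    (lt_of_le_of_lt (by simpa using hj) (by positivity))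
  exact hlt.not_ge
    (hmin (Set.mem_iUnion.2 ⟨g', (convex_convexHull ℝ _).segment_subset hpg' hjg' hu⟩))

end InnerProductSpace

variable {V : Type*} [AddCommGroup V] [Module ℝ V]

theorem colorful_caratheodory {ι κ : Type*} [FiniteDimensional ℝ V] [Fintype ι] [Finite κ]
    (f : ι → κ → V)
    (hcard : finrank ℝ V < Fintype.card ι) (hf : ∀ i, (0 : V) ∈ convexHull ℝ (Set.range (f i))) :
    ∃ g : ι → κ, (0 : V) ∈ convexHull ℝ (Set.range fun i => f i (g i)) := by
  let e : V ≃ₗ[ℝ] EuclideanSpace ℝ (Fin (finrank ℝ V)) := LinearEquiv.ofFinrankEq _ _ (by simp)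
  have he : ∀ s : Set V, (0 : V) ∈ convexHull ℝ s ↔ 0 ∈ convexHull ℝ (e '' s) := fun s => by
    have := e.toLinearMap.image_convexHull s
    rw [LinearEquiv.coe_coe] at this
    rw [← this, ← map_zero e, e.injective.mem_set_image]
  obtain ⟨g, hg⟩ := colorful_caratheodory_of_inner (fun i j => e (f i j)) (by simpa using hcard)
    fun i => by have := (he _).1 (hf i); rwa [← Set.range_comp] at this
  exact ⟨g, (he _).2 (by rw [← Set.range_comp]; exact hg)⟩

section Sarkaria

variable (R M : Type*) [Semiring R] [AddCommGroup M] [Module R M] (m : ℕ)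

/-- `succSubZero (Pi.single j u)` is Sarkaria's `u ⊗ v j`, for `v 0 = -(1, …, 1)` and
`v (k + 1) = Pi.single k 1`: the only linear relation among the `v j` is `∑ v j = 0`. -/
def succSubZero : (Fin (m + 1) → M) →ₗ[R] Fin m → M where
  toFun e k := e k.succ - e 0
  map_add' e e' := by ext k; simp only [Pi.add_apply]; abel
  map_smul' c e := by ext k; simp [smul_sub]

variable {R M m}

@[simp]
lemma succSubZero_apply (e : Fin (m + 1) → M) (k : Fin m) :
    succSubZero R M m e k = e k.succ - e 0 :=
  rfl

lemma succSubZero_eq_zero_iff {e : Fin (m + 1) → M} :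
    succSubZero R M m e = 0 ↔ ∀ j, e j = e 0 := by
  refine ⟨fun h j => Fin.cases rfl (fun k => sub_eq_zero.1 (congr_fun h k)) j,
    fun h => funext fun k => by simp [h]⟩

end Sarkaria

lemma zero_mem_convexHull_range_succSubZero_single (m : ℕ) (u : V) :
    (0 : Fin m → V) ∈ convexHull ℝ (Set.range fun j => succSubZero ℝ V m (Pi.single j u)) := by
  classical
  have hsum : ∑ j, succSubZero ℝ V m (Pi.single j u) = 0 := by
    rw [← map_sum, Finset.univ_sum_single (fun _ => u), succSubZero_eq_zero_iff.2 fun _ => rfl]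
  have := (univ : Finset (Fin (m + 1))).centerMass_mem_convexHull (w := fun _ => (1 : ℝ))
    (z := fun j => succSubZero ℝ V m (Pi.single j u)) (fun _ _ => zero_le_one)
    (sum_pos (fun _ _ => one_pos) univ_nonempty) fun j _ => Set.mem_range_self j
  simpa [centerMass, hsum] using this

lemma nonempty_iInter_convexHull_of_sum_smul_succSubZero_single {ι : Type*} [Fintype ι] {m : ℕ}
    (x : ι → V) (g : ι → Fin (m + 1)) {w : ι → ℝ} (hw : w ∈ stdSimplex ℝ ι)
    (h : ∑ i, w i • succSubZero ℝ (V × ℝ) m (Pi.single (g i) (x i, 1)) = 0) :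
    (⋂ j, convexHull ℝ (x '' (g ⁻¹' {j}))).Nonempty := by
  classical
  set z : Fin (m + 1) → V × ℝ := ∑ i, w i • Pi.single (g i) (x i, 1)
  have hz : ∀ j, z j =
      (∑ i ∈ univ.filter (g · = j), w i • x i, ∑ i ∈ univ.filter (g · = j), w i) := by
    intro j
    ext <;> simp [z, Finset.sum_apply, Pi.single_apply, Finset.sum_filter, Prod.fst_sum,
      Prod.snd_sum, eq_comm, apply_ite]
  have hconst : ∀ j, z j = z 0 :=
    succSubZero_eq_zero_iff (R := ℝ) |>.1 (by simpa only [z, map_sum, map_smul] using h)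
  have hcenterMass : ∀ j, (univ.filter (g · = j)).centerMass w x = (z j).2⁻¹ • (z j).1 := by
    simp [centerMass, hz]
  have hpos : 0 < (z 0).2 := by
    have hsum : ∑ j, (z j).2 = 1 := by simp only [hz, sum_fiberwise, hw.2]
    simp only [hconst, sum_const, card_univ, Fintype.card_fin, nsmul_eq_mul] at hsum
    nlinarith
  refine ⟨(z 0).2⁻¹ • (z 0).1, Set.mem_iInter.2 fun j => ?_⟩
  rw [← hconst j, ← hcenterMass]
  refine centerMass_mem_convexHull _ (fun i _ => hw.1 i) ?_
    fun i hi => ⟨i, (mem_filter.1 hi).2, rfl⟩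
  simpa only [← hconst j, hz] using hpos

theorem tverberg_partition {ι : Type*} [FiniteDimensional ℝ V] [Fintype ι] {m : ℕ}
    (hcard : (finrank ℝ V + 1) * m < Fintype.card ι) (x : ι → V) :
    ∃ g : ι → Fin (m + 1), (⋂ j, convexHull ℝ (x '' (g ⁻¹' {j}))).Nonempty := by
  have hdim : finrank ℝ (Fin m → V × ℝ) < Fintype.card ι := by
    simpa [finrank_pi_fintype, finrank_prod, mul_comm] using hcard
  obtain ⟨g, hg⟩ := colorful_caratheodory
    (fun i j => succSubZero ℝ (V × ℝ) m (Pi.single j (x i, 1))) hdim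
    fun i => zero_mem_convexHull_range_succSubZero_single m _
  obtain ⟨w, hw, hwg⟩ := exists_sum_smul_eq_of_mem_convexHull_range hg
  exact ⟨g, nonempty_iInter_convexHull_of_sum_smul_succSubZero_single x g hw hwg⟩

theorem tverberg_general (d q : ℕ) (hq : 1 ≤ q)
    (x : Fin ((d+1)*(q-1)+1) → EuclideanSpace ℝ (Fin d)) :
    ∃ A : Fin q → Set (Fin ((d+1)*(q-1)+1)),
      (∀ i, (A i).Nonempty) ∧
      (∀ i j, i ≠ j → Disjoint (A i) (A j)) ∧
      (⋃ i, A i) = Set.univ ∧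
      (⋂ i, convexHull ℝ (x '' A i)).Nonempty := by
  obtain ⟨m, rfl⟩ : ∃ m, q = m + 1 := ⟨q - 1, by omega⟩
  obtain ⟨g, c, hc⟩ := tverberg_partition (m := m) (by simp) x
  refine ⟨fun j => g ⁻¹' {j}, fun j => ?_, fun i j hij => ?_, ?_, ⟨c, hc⟩⟩
  · exact (convexHull_nonempty_iff.1 ⟨c, Set.mem_iInter.1 hc j⟩).of_image
  · exact (Set.disjoint_singleton.2 hij).preimage g
  · ext i
    simp

/-- **Tverberg's theorem.** Any `(d+1)(q-1)+1` points in `ℝ^d` can be partitioned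
into `q` pairwise disjoint nonempty sets whose convex hulls have a common point. -/
theorem tverberg (d q : ℕ) (hd : 1 ≤ d) (hq : 1 ≤ q)
    (x : Fin ((d+1)*(q-1)+1) → EuclideanSpace ℝ (Fin d)) :
    ∃ A : Fin q → Set (Fin ((d+1)*(q-1)+1)),
      (∀ i, (A i).Nonempty) ∧
      (∀ i j, i ≠ j → Disjoint (A i) (A j)) ∧
      (⋃ i, A i) = Set.univ ∧
      (⋂ i, convexHull ℝ (x '' A i)).Nonempty :=
  tverberg_general d q hq x
end

section
/- Let d ≥ 2 and q ≥ 1. If every continuous map f : Δ^{(d+1)(q-1)} → ℝ^d admits a Tverberg partition, then every continuous map g : Δ^{d(q-1)} → ℝ^{d-1} admits a Tverberg partition. -/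
open scoped BigOperators

noncomputable section

/-- Euclidean space `ℝ^d`. -/
abbrev Euc (d : ℕ) : Type := EuclideanSpace ℝ (Fin d)

/-- The standard `N`-simplex `Δ^N ⊆ ℝ^{N+1}`. -/
def stdSimp (N : ℕ) : Set (Fin (N+1) → ℝ) :=
  {x | (∀ i, 0 ≤ x i) ∧ ∑ i, x i = 1}

/-- The face `σ_S` of `Δ^N` spanned by the vertices in `S`. -/
def simpFace {N : ℕ} (S : Finset (Fin (N+1))) : Set (Fin (N+1) → ℝ) :=
  {x ∈ stdSimp N | ∀ i ∉ S, x i = 0}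

/-- The `k`-skeleton `Δ_k^N` of the standard `N`-simplex. -/
def skel (N k : ℕ) : Set (Fin (N+1) → ℝ) :=
  {x ∈ stdSimp N | {i | x i ≠ 0}.ncard ≤ k + 1}

/-- A Tverberg partition for (the relevant restriction of) `f`: a set of `q`
pairwise disjoint nonempty vertex subsets whose faces have images with a common point. -/
def IsTverbergPartition (q : ℕ) {N d : ℕ}
    (f : (Fin (N+1) → ℝ) → Euc d) (P : Finset (Finset (Fin (N+1)))) : Prop :=
  P.card = q ∧ (∀ S ∈ P, S.Nonempty) ∧
  (∀ S ∈ P, ∀ T ∈ P, S ≠ T → Disjoint S T) ∧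
  (⋂ S ∈ P, f '' simpFace S).Nonempty

/-- If the topological Tverberg theorem holds for `q` and `d`,
then it also holds for `q` and `d - 1`. -/
theorem topological_tverberg_dim_reduction (d q : ℕ) (hd : 2 ≤ d) (hq : 1 ≤ q)
    (H : ∀ f : (Fin ((d+1)*(q-1)+1) → ℝ) → Euc d,
      ContinuousOn f (stdSimp ((d+1)*(q-1))) →
      ∃ P : Finset (Finset (Fin ((d+1)*(q-1)+1))), IsTverbergPartition q f P) :
    ∀ g : (Fin (d*(q-1)+1) → ℝ) → Euc (d-1),
      ContinuousOn g (stdSimp (d*(q-1))) →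
      ∃ P : Finset (Finset (Fin (d*(q-1)+1))), IsTverbergPartition q g P := by
  intro g hg
  have hMN : d*(q-1) ≤ (d+1)*(q-1) := Nat.mul_le_mul_right _ (by omega)
  have hNM : (d+1)*(q-1) = d*(q-1) + (q-1) := by ring
  -- the collapsing map on indices
  set c : Fin (((d+1)*(q-1))+1) → Fin ((d*(q-1))+1) := fun i => ⟨min i.val (d*(q-1)), by omega⟩ with hcdef
  -- the collapsing map on points of the simplex
  set π : (Fin (((d+1)*(q-1))+1) → ℝ) → (Fin ((d*(q-1))+1) → ℝ) :=
    fun x j => ∑ i ∈ Finset.univ.filter (fun i => c i = j), x i with hπdef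
  set Eext : Finset (Fin (((d+1)*(q-1))+1)) := Finset.univ.filter (fun i => (d*(q-1)) < i.val) with hEdef
  have hπsum : ∀ x : Fin (((d+1)*(q-1))+1) → ℝ, ∑ j, π x j = ∑ i, x i := fun x =>
    Finset.sum_fiberwise_of_maps_to (fun i _ => Finset.mem_univ _) x
  have hπmaps : Set.MapsTo π (stdSimp ((d+1)*(q-1))) (stdSimp (d*(q-1))) := by
    intro x hx
    exact ⟨fun j => Finset.sum_nonneg fun i _ => hx.1 i, by rw [hπsum]; exact hx.2⟩
  have hπc : Continuous π :=
    continuous_pi fun j => continuous_finset_sum _ fun i _ => continuous_apply i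
  set eqd : Euc d ≃L[ℝ] (Fin d → ℝ) := EuclideanSpace.equiv (Fin d) ℝ with heqd
  set eq1 : Euc (d-1) ≃L[ℝ] (Fin (d-1) → ℝ) := EuclideanSpace.equiv (Fin (d-1)) ℝ with heq1
  set F : (Fin (((d+1)*(q-1))+1) → ℝ) → (Fin d → ℝ) :=
    fun x k => if h : (k:ℕ) < d - 1 then eq1 (g (π x)) ⟨k, h⟩ else ∑ i ∈ Eext, x i
    with hFdef
  set f : (Fin (((d+1)*(q-1))+1) → ℝ) → Euc d := fun x => eqd.symm (F x) with hfdef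
  have hgc : ContinuousOn (g ∘ π) (stdSimp ((d+1)*(q-1))) :=
    hg.comp hπc.continuousOn hπmaps
  have hFc : ContinuousOn F (stdSimp ((d+1)*(q-1))) := by
    apply continuousOn_pi.2
    intro k
    by_cases hk : (k:ℕ) < d - 1
    · simp only [hFdef, dif_pos hk]
      exact ((continuous_apply (⟨k, hk⟩ : Fin (d-1))).comp eq1.continuous).comp_continuousOn hgc
    · simp only [hFdef, dif_neg hk]
      exact (continuous_finset_sum _ fun i _ => continuous_apply i).continuousOn
  have hfc : ContinuousOn f (stdSimp ((d+1)*(q-1))) :=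
    eqd.symm.continuous.comp_continuousOn hFc
  obtain ⟨P, hPcard, hPne, hPdisj, y, hy⟩ := H f hfc
  have hyS : ∀ S ∈ P, ∃ x, x ∈ simpFace S ∧ f x = y := by
    intro S hS
    obtain ⟨x, hx, hfx⟩ := Set.mem_iInter₂.1 hy S hS
    exact ⟨x, hx, hfx⟩
  choose xx hxx hfxx using hyS
  set Y : Fin d → ℝ := eqd y with hYdef
  have hFY : ∀ S (hS : S ∈ P), F (xx S hS) = Y := by
    intro S hS
    have h := congrArg eqd (hfxx S hS)
    rwa [hfdef, heqd, ContinuousLinearEquiv.apply_symm_apply] at h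
  set t : ℝ := Y ⟨d-1, by omega⟩ with htdef
  have hts : ∀ S (hS : S ∈ P), ∑ i ∈ Eext, xx S hS i = t := by
    intro S hS
    have h := congrFun (hFY S hS) ⟨d-1, by omega⟩
    rw [hFdef] at h
    simpa using h
  by_cases ht0 : t = 0
  · -- main case: construct the partition for g
    have hxzero : ∀ S (hS : S ∈ P), ∀ i ∈ Eext, xx S hS i = 0 := by
      intro S hS
      have hsum0 : ∑ i ∈ Eext, xx S hS i = 0 := by rw [hts S hS, ht0]
      exact fun i hi =>
        (Finset.sum_eq_zero_iff_of_nonneg fun i _ => (hxx S hS).1.1 i).1 hsum0 i hi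
    have hMN1 : (d*(q-1)) + 1 ≤ ((d+1)*(q-1)) + 1 := by omega
    set ι : Fin ((d*(q-1))+1) → Fin (((d+1)*(q-1))+1) := Fin.castLE hMN1 with hιdef
    have hιinj : Function.Injective ι := Fin.castLE_injective _
    set T : Finset (Fin (((d+1)*(q-1))+1)) → Finset (Fin ((d*(q-1))+1)) :=
      fun S => S.preimage ι hιinj.injOn with hTdef
    have hTmem : ∀ (j : Fin ((d*(q-1))+1)) (S : Finset (Fin (((d+1)*(q-1))+1))), j ∈ T S ↔ ι j ∈ S := by
      intro j S; rw [hTdef]; exact Finset.mem_preimage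
    have hTne : ∀ S (hS : S ∈ P), (T S).Nonempty := by
      intro S hS
      obtain ⟨i, hi⟩ : ∃ i, xx S hS i ≠ 0 := by
        by_contra hcon
        push_neg at hcon
        have : (1:ℝ) = 0 := by
          rw [← (hxx S hS).1.2]; exact Finset.sum_eq_zero fun i _ => hcon i
        norm_num at this
      have hiS : i ∈ S := by
        by_contra hiS
        exact hi ((hxx S hS).2 i hiS)
      have hiM : i.val ≤ (d*(q-1)) := by
        by_contra hiM
        exact hi (hxzero S hS i (by simp [hEdef]; omega))
      refine ⟨⟨i.val, by omega⟩, (hTmem _ _).2 ?_⟩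
      have : ι ⟨i.val, by omega⟩ = i := by
        apply Fin.ext; simp [hιdef]
      rwa [this]
    have hTinj : Set.InjOn T P := by
      intro S hS S' hS' hTeq
      by_contra hne
      obtain ⟨j, hj⟩ := hTne S hS
      have hj' : j ∈ T S' := hTeq ▸ hj
      exact Finset.disjoint_left.1 (hPdisj S hS S' hS' hne)
        ((hTmem j S).1 hj) ((hTmem j S').1 hj')
    set w : Euc (d-1) := eq1.symm (fun i : Fin (d-1) => Y ⟨i.val, by omega⟩) with hwdef
    have hface : ∀ S (hS : S ∈ P), π (xx S hS) ∈ simpFace (T S) := by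
      intro S hS
      refine ⟨⟨fun j => Finset.sum_nonneg fun i _ => (hxx S hS).1.1 i,
        by rw [hπsum]; exact (hxx S hS).1.2⟩, ?_⟩
      intro j hj
      apply Finset.sum_eq_zero
      intro i hi
      have hci : c i = j := (Finset.mem_filter.1 hi).2
      have hιjS : ι j ∉ S := fun h => hj ((hTmem j S).2 h)
      have hval : min i.val (d*(q-1)) = j.val := congrArg Fin.val hci
      rcases lt_trichotomy (i.val) (d*(q-1)) with h | h | h
      · have : ι j = i := by
          apply Fin.ext
          simp only [hιdef, Fin.coe_castLE]
          omega
        exact (hxx S hS).2 i (this ▸ hιjS)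
      · have : ι j = i := by
          apply Fin.ext
          simp only [hιdef, Fin.coe_castLE]
          omega
        exact (hxx S hS).2 i (this ▸ hιjS)
      · exact hxzero S hS i (by simp [hEdef]; omega)
    have hw : ∀ S (hS : S ∈ P), g (π (xx S hS)) = w := by
      intro S hS
      rw [hwdef]
      apply eq1.injective
      rw [ContinuousLinearEquiv.apply_symm_apply]
      funext i
      have hlt : (i:ℕ) < d - 1 := i.isLt
      have h := congrFun (hFY S hS) ⟨i.val, by omega⟩
      rw [hFdef] at h
      simp only [dif_pos hlt] at h
      have : (⟨i.val, hlt⟩ : Fin (d-1)) = i := Fin.ext rfl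
      rw [this] at h
      exact h
    refine ⟨P.image T, ?_, ?_, ?_, w, ?_⟩
    · rw [Finset.card_image_of_injOn hTinj, hPcard]
    · intro U hU
      obtain ⟨S, hS, rfl⟩ := Finset.mem_image.1 hU
      exact hTne S hS
    · intro U hU V hV hUV
      obtain ⟨S, hS, rfl⟩ := Finset.mem_image.1 hU
      obtain ⟨S', hS', rfl⟩ := Finset.mem_image.1 hV
      have hne : S ≠ S' := fun h => hUV (by rw [h])
      rw [Finset.disjoint_left]
      intro j hj hj'
      exact Finset.disjoint_left.1 (hPdisj S hS S' hS' hne)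
        ((hTmem j S).1 hj) ((hTmem j S').1 hj')
    · apply Set.mem_iInter₂.2
      intro U hU
      obtain ⟨S, hS, rfl⟩ := Finset.mem_image.1 hU
      exact ⟨π (xx S hS), hface S hS, hw S hS⟩
  · -- contradiction case: t ≠ 0
    exfalso
    have hext : ∀ S ∈ P, ∃ i, i ∈ Eext ∧ i ∈ S := by
      intro S hS
      by_contra hcon
      push_neg at hcon
      have : ∑ i ∈ Eext, xx S hS i = 0 :=
        Finset.sum_eq_zero fun i hi => (hxx S hS).2 i (hcon i hi)
      exact ht0 (by rw [← hts S hS, this])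
    classical
    set φ : Finset (Fin (((d+1)*(q-1))+1)) → Fin (((d+1)*(q-1))+1) :=
      fun S => if h : ∃ i, i ∈ Eext ∧ i ∈ S then h.choose else 0 with hφdef
    have hφ : ∀ S ∈ P, φ S ∈ Eext ∧ φ S ∈ S := by
      intro S hS
      have h := hext S hS
      rw [hφdef]
      simp only [dif_pos h]
      exact h.choose_spec
    have hcard : P.card ≤ Eext.card := by
      apply Finset.card_le_card_of_injOn φ (fun S hS => (hφ S hS).1)
      intro S hS S' hS' heq
      by_contra hne
      exact Finset.disjoint_left.1 (hPdisj S hS S' hS' hne)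
        (hφ S hS).2 (heq ▸ (hφ S' hS').2)
    have hEcard : Eext.card = q - 1 := by
      have : Eext = Finset.Ioi (⟨(d*(q-1)), by omega⟩ : Fin (((d+1)*(q-1))+1)) := by
        ext i
        simp [hEdef, Finset.mem_Ioi, Fin.lt_def]
      rw [this, Fin.card_Ioi]
      simp
      omega
    omega
end
end

section
/- Let d, q ≥ 1. For every continuous map f : Δ_d^{(d+1)(q-1)} → ℝ^d there exists ε > 0 such that for every continuous map f̃ : Δ_d^{(d+1)(q-1)} → ℝ^d with sup_{x ∈ Δ_d^{(d+1)(q-1)}} ‖f̃(x) − f(x)‖ < ε (Euclidean norm on ℝ^d), every Tverberg partition of f̃ is also a Tverberg partition of f. -/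
open scoped BigOperators

noncomputable section

/-! There are only finitely many candidate partitions `P`. For each `P` that is not a Tverberg
partition of `f`, the images `f(σ_S)`, `S ∈ P`, are compact with empty intersection, hence so
are their `ε_P`-thickenings for some `ε_P > 0`; a map `ε_P`-close to `f` sends `σ_S` into the
`ε_P`-thickening of `f(σ_S)`. Any `ε` below all the `ε_P` works. -/

open Filter Metric Set Topology

/- A point of `⋂ i, thickening ε (K i)` lies within `ε` of a point of the product `∏ i, K i`
in the sup metric, and that point is a constant family, i.e. lies on the diagonal. The compact
product misses the closed diagonal, so some uniform thickening of it still does. -/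
theorem eventually_biInter_thickening_eq_empty {E ι : Type*} [MetricSpace E]
    {P : Finset ι} {K : ι → Set E} (hK : ∀ i ∈ P, IsCompact (K i)) (h : ⋂ i ∈ P, K i = ∅) :
    ∀ᶠ ε in 𝓝[>] (0 : ℝ), ⋂ i ∈ P, thickening ε (K i) = ∅ := by
  rcases P.eq_empty_or_nonempty with rfl | ⟨i₀, hi₀⟩
  · simp_all
  set C : Set (P → E) := univ.pi fun i => K i
  set D : Set (P → E) := ⋂ (i) (j), {x | x i = x j}
  have hC : IsCompact C := isCompact_univ_pi fun i => hK i i.2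
  have hD : IsClosed D := isClosed_iInter fun i => isClosed_iInter fun j =>
    isClosed_eq (continuous_apply i) (continuous_apply j)
  have hCD : C ⊆ Dᶜ := by
    intro x hxC hxD
    have : x ⟨i₀, hi₀⟩ ∈ ⋂ i ∈ P, K i :=
      mem_iInter₂.2 fun i hi => mem_iInter₂.1 hxD ⟨i, hi⟩ ⟨i₀, hi₀⟩ ▸ hxC ⟨i, hi⟩ trivial
    simp [h] at this
  obtain ⟨δ, hδ, hδC⟩ := hC.exists_thickening_subset_open hD.isOpen_compl hCD
  filter_upwards [Ioo_mem_nhdsGT hδ] with ε hε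
  refine eq_empty_of_forall_notMem fun y hy => ?_
  have : ∀ i : P, ∃ x ∈ K i, dist y x < ε := fun i =>
    mem_thickening_iff.1 (mem_iInter₂.1 hy i i.2)
  choose x hxK hxy using this
  have : Function.const P y ∈ thickening δ C := mem_thickening_iff.2
    ⟨x, fun i _ => hxK i, (dist_pi_lt_iff hδ).2 fun i => (hxy i).trans hε.2⟩
  exact hδC this (mem_iInter₂.2 fun _ _ => rfl)

theorem image_subset_thickening_image {X E : Type*} [PseudoMetricSpace E] {f g : X → E}
    {K : Set X} {ε : ℝ} (h : ∀ x ∈ K, dist (g x) (f x) < ε) :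
    g '' K ⊆ thickening ε (f '' K) := by
  rintro _ ⟨x, hx, rfl⟩
  exact mem_thickening_iff.2 ⟨f x, mem_image_of_mem f hx, h x hx⟩

theorem eventually_biInter_image_nonempty_of_dist_lt {X E ι : Type*} [TopologicalSpace X]
    [MetricSpace E] {f : X → E} {s : Set X} (hf : ContinuousOn f s) {P : Finset ι}
    {K : ι → Set X} (hK : ∀ i ∈ P, IsCompact (K i)) (hKs : ∀ i ∈ P, K i ⊆ s) :
    ∀ᶠ ε in 𝓝[>] (0 : ℝ), ∀ g : X → E, (∀ x ∈ s, dist (g x) (f x) < ε) →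
      (⋂ i ∈ P, g '' K i).Nonempty → (⋂ i ∈ P, f '' K i).Nonempty := by
  by_cases hfP : (⋂ i ∈ P, f '' K i).Nonempty
  · exact Eventually.of_forall fun _ _ _ _ => hfP
  have hfK : ∀ i ∈ P, IsCompact (f '' K i) := fun i hi =>
    (hK i hi).image_of_continuousOn (hf.mono (hKs i hi))
  filter_upwards [eventually_biInter_thickening_eq_empty hfK (not_nonempty_iff_eq_empty.1 hfP)]
    with ε hε g hg ⟨y, hy⟩
  have : y ∈ ⋂ i ∈ P, thickening ε (f '' K i) := mem_iInter₂.2 fun i hi =>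
    image_subset_thickening_image (fun x hx => hg x (hKs i hi hx)) (mem_iInter₂.1 hy i hi)
  simp [hε] at this

theorem simpFace_subset_skel {N k : ℕ} {S : Finset (Fin (N+1))} (hS : S.card ≤ k + 1) :
    simpFace S ⊆ skel N k := by
  rintro x ⟨hx, hx0⟩
  refine ⟨hx, ?_⟩
  have hsub : {i | x i ≠ 0} ⊆ (S : Set (Fin (N+1))) := fun i => not_imp_comm.1 (hx0 i)
  calc {i | x i ≠ 0}.ncard ≤ (S : Set (Fin (N+1))).ncard := ncard_le_ncard hsub S.finite_toSet
    _ = S.card := ncard_coe_finset S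
    _ ≤ k + 1 := hS

theorem isCompact_simpFace {N : ℕ} (S : Finset (Fin (N+1))) : IsCompact (simpFace S) := by
  refine (isCompact_stdSimplex ℝ (Fin (N+1))).inter_right ?_
  show IsClosed {x : Fin (N+1) → ℝ | ∀ i ∉ S, x i = 0}
  simp only [ofPred_forall]
  exact isClosed_iInter fun i => isClosed_iInter fun _ =>
    isClosed_eq (continuous_apply i) continuous_const

theorem tverberg_partition_stable_general (d q : ℕ)
    (f : (Fin ((d+1)*(q-1)+1) → ℝ) → Euc d)
    (hf : ContinuousOn f (skel ((d+1)*(q-1)) d)) :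
    ∃ ε > (0:ℝ), ∀ g : (Fin ((d+1)*(q-1)+1) → ℝ) → Euc d,
      ContinuousOn g (skel ((d+1)*(q-1)) d) →
      (∀ x ∈ skel ((d+1)*(q-1)) d, ‖g x - f x‖ < ε) →
      ∀ P : Finset (Finset (Fin ((d+1)*(q-1)+1))),
        (IsTverbergPartition q g P ∧ ∀ S ∈ P, S.card ≤ d + 1) →
        (IsTverbergPartition q f P ∧ ∀ S ∈ P, S.card ≤ d + 1) := by
  have hstable : ∀ P : Finset (Finset (Fin ((d+1)*(q-1)+1))), ∀ᶠ ε in 𝓝[>] (0 : ℝ),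
      (∀ S ∈ P, S.card ≤ d + 1) → ∀ g : (Fin ((d+1)*(q-1)+1) → ℝ) → Euc d,
        (∀ x ∈ skel ((d+1)*(q-1)) d, dist (g x) (f x) < ε) →
        (⋂ S ∈ P, g '' simpFace S).Nonempty → (⋂ S ∈ P, f '' simpFace S).Nonempty :=
    fun P => eventually_imp_distrib_left.2 fun hP =>
      eventually_biInter_image_nonempty_of_dist_lt hf (fun S _ => isCompact_simpFace S)
        fun S hS => simpFace_subset_skel (hP S hS)
  obtain ⟨ε, hε, hεpos⟩ := ((eventually_all.2 hstable).and self_mem_nhdsWithin).exists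
  refine ⟨ε, hεpos, fun g _ hg P ⟨⟨hcard, hne, hdisj, hint⟩, hsize⟩ => ?_⟩
  have hg' : ∀ x ∈ skel ((d+1)*(q-1)) d, dist (g x) (f x) < ε := fun x hx =>
    dist_eq_norm (g x) (f x) ▸ hg x hx
  exact ⟨⟨hcard, hne, hdisj, hε P hsize g hg' hint⟩, hsize⟩

/-- Approximation lemma: small perturbations of a map on the `d`-skeleton
create no new Tverberg partitions. -/
theorem tverberg_partition_stable (d q : ℕ) (hd : 1 ≤ d) (hq : 1 ≤ q)
    (f : (Fin ((d+1)*(q-1)+1) → ℝ) → Euc d)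
    (hf : ContinuousOn f (skel ((d+1)*(q-1)) d)) :
    ∃ ε > (0:ℝ), ∀ g : (Fin ((d+1)*(q-1)+1) → ℝ) → Euc d,
      ContinuousOn g (skel ((d+1)*(q-1)) d) →
      (∀ x ∈ skel ((d+1)*(q-1)) d, ‖g x - f x‖ < ε) →
      ∀ P : Finset (Finset (Fin ((d+1)*(q-1)+1))),
        (IsTverbergPartition q g P ∧ ∀ S ∈ P, S.card ≤ d + 1) →
        (IsTverbergPartition q f P ∧ ∀ S ∈ P, S.card ≤ d + 1) :=
  tverberg_partition_stable_general d q f hf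
end
end

section
/- Let q ≥ 1. (a) Every continuous map f : Δ_0^{2(q-1)} → ℝ (equivalently, every assignment of a real number to each of the 2q−1 vertices) admits at least (q−1)! winding partitions, where winding partitions are taken with d = 1. (b) Every continuous map f : Δ^{2(q-1)} → ℝ admits at least (q−1)! Tverberg partitions. -/
/-!
Order the `2q - 1` vertices by their values and let `m` be the median one. Matching the `q - 1`
vertices below `m` with the `q - 1` vertices above it, in any of the `(q - 1)!` possible ways,
gives edges whose value intervals all contain `f m`; together with `{m}` they form a winding
partition and, by the intermediate value theorem on each edge, a Tverberg partition. For the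
winding condition, a nullhomotopy of `f` on the boundary `{a, b}` of an edge would be a path in
`ℝ \ {p}` from `f a ≤ p` to `f b ≥ p`.
-/

open scoped BigOperators

noncomputable section

/-- The boundary `∂σ_S` of the face `σ_S`. -/
def simpFaceBoundary {N : ℕ} (S : Finset (Fin (N+1))) : Set (Fin (N+1) → ℝ) :=
  {x ∈ simpFace S | ∃ i ∈ S, x i = 0}

/-- `p ∈ W_{≠0}(f|_{∂σ_S})`: either `p` is in the image of the boundary, or the
corestriction of `f|_{∂σ_S}` to `ℝ^d \ {p}` is not nullhomotopic (there is no
continuous map agreeing with `f` on `∂σ_S` that is homotopic to a constant). -/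
def InWne (d : ℕ) {N : ℕ} (f : (Fin (N+1) → ℝ) → Euc d)
    (S : Finset (Fin (N+1))) (p : Euc d) : Prop :=
  p ∈ f '' simpFaceBoundary S ∨
  ¬ ∃ (g : C(↥(simpFaceBoundary S), ↥({p}ᶜ : Set (Euc d))))
      (y : ↥({p}ᶜ : Set (Euc d))),
      (∀ x : ↥(simpFaceBoundary S), (g x : Euc d) = f ↑x) ∧
      g.Homotopic (ContinuousMap.const _ y)

/-- A winding partition (in dimension `d`) for `f` defined on the `(d-1)`-skeleton:
`q` pairwise disjoint nonempty vertex subsets, each of size at most `d+1`, together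
with a winding point `p`. -/
def IsWindingPartition (d q : ℕ) {N : ℕ}
    (f : (Fin (N+1) → ℝ) → Euc d) (P : Finset (Finset (Fin (N+1)))) : Prop :=
  P.card = q ∧ (∀ S ∈ P, S.Nonempty) ∧ (∀ S ∈ P, S.card ≤ d + 1) ∧
  (∀ S ∈ P, ∀ T ∈ P, S ≠ T → Disjoint S T) ∧
  ∃ p : Euc d, ∀ S ∈ P,
    (S.card ≤ d → p ∈ f '' simpFace S) ∧
    (S.card = d + 1 → InWne d f S p)

open Finset

lemma euc_one_ext {x y : Euc 1} (h : x 0 = y 0) : x = y := by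
  ext i
  rwa [Subsingleton.elim i 0]

section Faces

variable {N : ℕ}

lemma single_mem_simpFace {S : Finset (Fin (N+1))} {i : Fin (N+1)} (hi : i ∈ S) :
    (Pi.single i 1 : Fin (N+1) → ℝ) ∈ simpFace S :=
  ⟨single_mem_stdSimplex ℝ i, fun _ hj => Pi.single_eq_of_ne (by rintro rfl; exact hj hi) 1⟩

lemma single_mem_simpFaceBoundary_pair {a b : Fin (N+1)} (hab : a ≠ b) :
    (Pi.single a 1 : Fin (N+1) → ℝ) ∈ simpFaceBoundary {a, b} :=
  ⟨single_mem_simpFace (mem_insert_self a _), b, by simp, Pi.single_eq_of_ne hab.symm 1⟩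

lemma convex_simpFace (S : Finset (Fin (N+1))) : Convex ℝ (simpFace S) := by
  have hS : simpFace S = stdSimplex ℝ (Fin (N+1)) ∩ ⋂ i ∉ S, {x | x i = 0} := by
    ext x; simp [simpFace, stdSimp, stdSimplex]
  rw [hS]
  exact (convex_stdSimplex ℝ _).inter <| convex_iInter₂ fun i _ =>
    convex_hyperplane (LinearMap.proj (R := ℝ) (φ := fun _ : Fin (N+1) => ℝ) i).isLinear 0

lemma mem_image_simpFace_of_between {f : (Fin (N+1) → ℝ) → Euc 1} {S : Finset (Fin (N+1))}
    (hf : ContinuousOn f (simpFace S)) {a b : Fin (N+1)} (ha : a ∈ S) (hb : b ∈ S) {p : Euc 1}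
    (hap : f (Pi.single a 1) 0 ≤ p 0) (hpb : p 0 ≤ f (Pi.single b 1) 0) :
    p ∈ f '' simpFace S := by
  obtain ⟨x, hx, hxp⟩ := (convex_simpFace S).isPreconnected.intermediate_value
    (single_mem_simpFace ha) (single_mem_simpFace hb)
    ((EuclideanSpace.proj (0 : Fin 1)).continuous.comp_continuousOn hf) ⟨hap, hpb⟩
  exact ⟨x, hx, euc_one_ext hxp⟩

end Faces

lemma not_joined_of_between {p : Euc 1} {x y : ({p}ᶜ : Set (Euc 1))}
    (hxp : (x : Euc 1) 0 ≤ p 0) (hpy : p 0 ≤ (y : Euc 1) 0) : ¬ Joined x y := by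
  rintro ⟨γ⟩
  obtain ⟨t, ht⟩ := intermediate_value_univ 0 1 (f := fun t => (γ t : Euc 1) 0)
    (by fun_prop) (by simpa using And.intro hxp hpy)
  exact (γ t).2 (euc_one_ext ht)

lemma inWne_pair {N : ℕ} (f : (Fin (N+1) → ℝ) → Euc 1) {a b : Fin (N+1)} (hab : a ≠ b)
    {p : Euc 1} (hap : f (Pi.single a 1) 0 ≤ p 0) (hpb : p 0 ≤ f (Pi.single b 1) 0) :
    InWne 1 f {a, b} p := by
  refine Or.inr ?_
  rintro ⟨g, y, hgf, ⟨H⟩⟩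
  let A : simpFaceBoundary {a, b} := ⟨_, single_mem_simpFaceBoundary_pair hab⟩
  let B : simpFaceBoundary {a, b} :=
    ⟨_, pair_comm a b ▸ single_mem_simpFaceBoundary_pair hab.symm⟩
  refine not_joined_of_between (x := g A) (y := g B) ?_ ?_
    (Joined.trans ⟨H.evalAt A⟩ ⟨(H.evalAt B).symm⟩)
  · rwa [hgf]
  · rwa [hgf]

section MedianPairing

variable {n : ℕ}

def lowIdx (i : Fin n) : Fin (2*n+1) := ⟨i, by omega⟩

def highIdx (i : Fin n) : Fin (2*n+1) := ⟨n+1+i, by omega⟩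

def midIdx (n : ℕ) : Fin (2*n+1) := ⟨n, by omega⟩

@[simp] lemma lowIdx_inj {i j : Fin n} : lowIdx i = lowIdx j ↔ i = j := by
  simp [lowIdx, Fin.ext_iff]

@[simp] lemma highIdx_inj {i j : Fin n} : highIdx i = highIdx j ↔ i = j := by
  simp [highIdx, Fin.ext_iff]

lemma lowIdx_lt_midIdx (i : Fin n) : lowIdx i < midIdx n := i.isLt

lemma midIdx_lt_highIdx (i : Fin n) : midIdx n < highIdx i :=
  Fin.mk_lt_mk.2 (by omega)

@[simp] lemma lowIdx_ne_midIdx (i : Fin n) : lowIdx i ≠ midIdx n := (lowIdx_lt_midIdx i).ne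

@[simp] lemma midIdx_ne_highIdx (i : Fin n) : midIdx n ≠ highIdx i := (midIdx_lt_highIdx i).ne

@[simp] lemma lowIdx_ne_highIdx (i j : Fin n) : lowIdx i ≠ highIdx j :=
  ((lowIdx_lt_midIdx i).trans (midIdx_lt_highIdx j)).ne

@[simp] lemma highIdx_ne_lowIdx (i j : Fin n) : highIdx i ≠ lowIdx j :=
  (lowIdx_ne_highIdx j i).symm

/-- The vertices of rank below the median are matched to those above it according to `π`;
`σ` lists the vertices in rank order. -/
def medianPairing (σ : Equiv.Perm (Fin (2*n+1))) (π : Equiv.Perm (Fin n)) :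
    Finset (Finset (Fin (2*n+1))) :=
  insert {σ (midIdx n)} (univ.image fun i => {σ (lowIdx i), σ (highIdx (π i))})

variable {σ : Equiv.Perm (Fin (2*n+1))} {π : Equiv.Perm (Fin n)}

lemma mem_medianPairing {S : Finset (Fin (2*n+1))} :
    S ∈ medianPairing σ π ↔
      S = {σ (midIdx n)} ∨ ∃ i, S = {σ (lowIdx i), σ (highIdx (π i))} := by
  simp [medianPairing, eq_comm]

lemma pair_mem_medianPairing_iff {i j : Fin n} :
    {σ (lowIdx i), σ (highIdx j)} ∈ medianPairing σ π ↔ π i = j := by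
  refine ⟨fun h => ?_, fun h => mem_medianPairing.2 (Or.inr ⟨i, by rw [h]⟩)⟩
  rcases mem_medianPairing.1 h with h | ⟨k, hk⟩
  · simpa using h.subset (mem_insert_self _ _)
  · have hi := hk.subset (mem_insert_self _ _)
    simp only [mem_insert, EmbeddingLike.apply_eq_iff_eq, lowIdx_inj, mem_singleton,
      lowIdx_ne_highIdx, or_false] at hi
    subst hi
    simpa [eq_comm] using hk.subset (mem_insert_of_mem (mem_singleton_self _))

lemma medianPairing_injective (σ : Equiv.Perm (Fin (2*n+1))) :
    Function.Injective (medianPairing σ) := fun π π' h =>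
  Equiv.ext fun i => by
    rw [← pair_mem_medianPairing_iff (σ := σ), h, pair_mem_medianPairing_iff]

lemma card_medianPairing : (medianPairing σ π).card = n + 1 := by
  rw [medianPairing, card_insert_of_notMem, card_image_of_injective, card_univ, Fintype.card_fin]
  · intro i j hij
    simpa using hij.subset (mem_insert_self _ _)
  · simp only [mem_image, mem_univ, true_and, not_exists]
    intro i h
    simpa using h.subset (mem_insert_self _ _)

lemma disjoint_of_mem_medianPairing :
    ∀ S ∈ medianPairing σ π, ∀ T ∈ medianPairing σ π, S ≠ T → Disjoint S T := by
  intro S hS T hT hST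
  rcases mem_medianPairing.1 hS with rfl | ⟨i, rfl⟩ <;>
    rcases mem_medianPairing.1 hT with rfl | ⟨j, rfl⟩
  · exact absurd rfl hST
  · simp [eq_comm]
  · simp [eq_comm]
  · have hij : i ≠ j := by rintro rfl; exact hST rfl
    simp [hij.symm]

lemma nonempty_of_mem_medianPairing {S : Finset (Fin (2*n+1))} (hS : S ∈ medianPairing σ π) :
    S.Nonempty := by
  rcases mem_medianPairing.1 hS with rfl | ⟨i, rfl⟩
  exacts [singleton_nonempty _, insert_nonempty _ _]

lemma eq_median_or_straddles_of_mem_medianPairing {α : Type*} [Preorder α]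
    {v : Fin (2*n+1) → α} (hv : Monotone (v ∘ σ)) {S : Finset (Fin (2*n+1))}
    (hS : S ∈ medianPairing σ π) :
    S = {σ (midIdx n)} ∨
      ∃ a b, a ≠ b ∧ S = {a, b} ∧ v a ≤ v (σ (midIdx n)) ∧ v (σ (midIdx n)) ≤ v b := by
  rcases mem_medianPairing.1 hS with rfl | ⟨i, rfl⟩
  · exact Or.inl rfl
  · exact Or.inr ⟨_, _, by simp, rfl, hv (lowIdx_lt_midIdx i).le, hv (midIdx_lt_highIdx _).le⟩

lemma factorial_le_ncard_of_medianPairing_mem (σ : Equiv.Perm (Fin (2*n+1)))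
    {s : Set (Finset (Finset (Fin (2*n+1))))} (hs : ∀ π, medianPairing σ π ∈ s) :
    n.factorial ≤ s.ncard :=
  calc n.factorial = (Set.univ : Set (Equiv.Perm (Fin n))).ncard := by
        rw [Set.ncard_univ, Nat.card_perm, Nat.card_fin]
    _ ≤ s.ncard :=
        Set.ncard_le_ncard_of_injOn _ (fun π _ => hs π) (medianPairing_injective σ).injOn

end MedianPairing

section SortedVertices

variable {n : ℕ} {f : (Fin (2*n+1) → ℝ) → Euc 1} {σ : Equiv.Perm (Fin (2*n+1))}

lemma isWindingPartition_medianPairing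
    (hσ : Monotone ((fun i => f (Pi.single i 1) 0) ∘ σ)) (π : Equiv.Perm (Fin n)) :
    IsWindingPartition 1 (n+1) f (medianPairing σ π) := by
  refine ⟨card_medianPairing, fun _ => nonempty_of_mem_medianPairing, fun S hS => ?_,
    disjoint_of_mem_medianPairing, f (Pi.single (σ (midIdx n)) 1), fun S hS => ?_⟩ <;>
  rcases eq_median_or_straddles_of_mem_medianPairing hσ hS with rfl | ⟨a, b, hab, rfl, ha, hb⟩
  · simp
  · exact card_le_two
  · exact ⟨fun _ => ⟨_, single_mem_simpFace (mem_singleton_self _), rfl⟩, by simp⟩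
  · exact ⟨by simp [card_pair hab], fun _ => inWne_pair f hab ha hb⟩

lemma isTverbergPartition_medianPairing (hf : ContinuousOn f (stdSimp (2*n)))
    (hσ : Monotone ((fun i => f (Pi.single i 1) 0) ∘ σ)) (π : Equiv.Perm (Fin n)) :
    IsTverbergPartition (n+1) f (medianPairing σ π) := by
  refine ⟨card_medianPairing, fun _ => nonempty_of_mem_medianPairing,
    disjoint_of_mem_medianPairing, f (Pi.single (σ (midIdx n)) 1),
    Set.mem_iInter₂.2 fun S hS => ?_⟩
  rcases eq_median_or_straddles_of_mem_medianPairing hσ hS with rfl | ⟨a, b, -, rfl, ha, hb⟩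
  · exact ⟨_, single_mem_simpFace (mem_singleton_self _), rfl⟩
  · exact mem_image_simpFace_of_between (hf.mono fun _ hx => hx.1) (mem_insert_self _ _)
      (mem_insert_of_mem (mem_singleton_self _)) ha hb

end SortedVertices

/-- The case `d = 1`: (a) every continuous map `Δ_0^{2(q-1)} → ℝ` has at least
`(q-1)!` winding partitions; (b) every continuous map `Δ^{2(q-1)} → ℝ` has at
least `(q-1)!` Tverberg partitions. -/
theorem winding_count_dim_one (q : ℕ) (hq : 1 ≤ q) :
    (∀ f : (Fin (2*(q-1)+1) → ℝ) → Euc 1,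
      ContinuousOn f (skel (2*(q-1)) 0) →
      Nat.factorial (q-1) ≤
        {P : Finset (Finset (Fin (2*(q-1)+1))) | IsWindingPartition 1 q f P}.ncard) ∧
    (∀ f : (Fin (2*(q-1)+1) → ℝ) → Euc 1,
      ContinuousOn f (stdSimp (2*(q-1))) →
      Nat.factorial (q-1) ≤
        {P : Finset (Finset (Fin (2*(q-1)+1))) | IsTverbergPartition q f P}.ncard) := by
  obtain ⟨n, rfl⟩ : ∃ n, q = n + 1 := ⟨q - 1, by omega⟩
  rw [Nat.add_sub_cancel]
  refine ⟨fun f _ => ?_, fun f hf => ?_⟩ <;>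
    refine factorial_le_ncard_of_medianPairing_mem (Tuple.sort fun i => f (Pi.single i 1) 0)
      fun π => ?_
  · exact isWindingPartition_medianPairing (Tuple.monotone_sort _) π
  · exact isTverbergPartition_medianPairing hf (Tuple.monotone_sort _) π
end
end
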